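/- arXiv:1703.07008 — 2 statements merged into one kernel-verified Lean document; each statement's English description precedes it below -/
import Mathlib

section
/- Let G be a finite connected chordal graph with clique number t ≥ 2, let x be any vertex of G, and let ℓ be a non-negative integer. Then the subgraph G_ℓ of G induced by the set N^ℓ(x) of vertices at distance exactly ℓ from x is a chordal graph, and its clique number is strictly smaller than t. -/
open SimpleGraph

/-- A simple graph is *chordal* if every cycle of length at least 4 has a chord, i.e.
two vertices of the cycle that are adjacent in the graph but not consecutive on the cycle. -/
def SimpleGraph.IsChordal {V : Type*} (G : SimpleGraph V) : Prop :=
  ∀ (v : V) (c : G.Walk v v), c.IsCycle → 4 ≤ c.length →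
    ∃ x y, x ∈ c.support ∧ y ∈ c.support ∧ G.Adj x y ∧ ¬ c.toSubgraph.Adj x y

/-- The exact distance-`p` graph of `G`: same vertex set, with an edge between distinct
vertices `u` and `v` iff their graph distance is exactly `p`. -/
def SimpleGraph.exactDistGraph {V : Type*} (G : SimpleGraph V) (p : ℕ) : SimpleGraph V where
  Adj u v := u ≠ v ∧ G.edist u v = p
  symm := ⟨fun u v h => ⟨h.1.symm, by rw [SimpleGraph.edist_comm]; exact h.2⟩⟩
  loopless := ⟨fun v h => h.1 rfl⟩

/-!
In a chordal graph, two non-adjacent vertices cannot be joined by two walks whose interiors lie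
in disjoint, mutually non-adjacent sets of vertices: shortest such walks would close up into a
chordless cycle of length at least 4. For the distance levels from `x`, this shows that the lower
neighbourhoods (neighbours one level closer to `x`) of two adjacent vertices of the same level are
nested. Hence a clique `K` in a level `ℓ > 0` has a common lower neighbour `w`, and `K ∪ {w}`
is a larger clique of `G`. Level `0` is the single vertex `x`, and chordality passes to induced
subgraphs.
-/

namespace SimpleGraph

variable {V : Type*} {G : SimpleGraph V}

namespace Walk

theorem IsChordless.append {u v w : V} {p : G.Walk u v} {q : G.Walk v w}
    (hp : p.IsChordless) (hq : q.IsChordless)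
    (hpq : ∀ a ∈ p.support, ∀ b ∈ q.support, G.Adj a b →
      a ∈ q.support ∨ b ∈ p.support) :
    (p.append q).IsChordless := by
  rw [isChordless_iff_forall_mem_edges]
  intro a b ha hb hab
  rw [mem_support_append_iff] at ha hb
  rw [edges_append, List.mem_append]
  rcases ha with ha | ha <;> rcases hb with hb | hb
  · exact .inl (hp.mem_edges ha hb hab)
  · rcases hpq a ha b hb hab with ha' | hb'
    · exact .inr (hq.mem_edges ha' hb hab)
    · exact .inl (hp.mem_edges ha hb' hab)
  · rcases hpq b hb a ha hab.symm with hb' | ha'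
    · exact .inr (hq.mem_edges ha hb' hab)
    · exact .inl (hp.mem_edges ha' hb hab)
  · exact .inr (hq.mem_edges ha hb hab)

theorem isChordless_of_forall_length_le {S : Set V} {u v : V} {p : G.Walk u v}
    (hp : ∀ y ∈ p.support, y ∈ S)
    (hmin : ∀ q : G.Walk u v, (∀ y ∈ q.support, y ∈ S) → p.length ≤ q.length) :
    p.IsChordless := by
  -- An edge between the `i`-th and `j`-th vertices would shortcut `p` unless `j = i + 1`.
  have hshortcut : ∀ i j, i < j → j ≤ p.length → G.Adj (p.getVert i) (p.getVert j) →
      s(p.getVert i, p.getVert j) ∈ p.edges := by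
    intro i j hij hj hadj
    let q : G.Walk u v := (p.take i).append (cons hadj (p.drop j))
    have hqS : ∀ y ∈ q.support, y ∈ S := by
      intro y hy
      rcases (mem_support_append_iff _ _).mp hy with hy | hy
      · exact hp y ((p.isSubwalk_take i).support_subset hy)
      · rcases List.mem_cons.mp hy with rfl | hy
        · exact hp _ (p.getVert_mem_support i)
        · exact hp y ((p.isSubwalk_drop j).support_subset hy)
    have hlen := hmin q hqS
    simp only [q, length_append, length_cons, take_length, drop_length] at hlen
    obtain rfl : j = i + 1 := by omega
    exact p.mk_mem_edges_iff_exists.mpr ⟨i, by omega, rfl⟩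
  rw [isChordless_iff_forall_mem_edges]
  intro a b ha hb hab
  obtain ⟨i, rfl, hi⟩ := mem_support_iff_exists_getVert.mp ha
  obtain ⟨j, rfl, hj⟩ := mem_support_iff_exists_getVert.mp hb
  rcases lt_trichotomy i j with hij | rfl | hij
  · exact hshortcut i j hij hj hab
  · exact absurd hab G.irrefl
  · exact Sym2.eq_swap ▸ hshortcut j i hij hi hab.symm

theorem exists_isPath_isChordless_of_support_subset {S : Set V} {u v : V} (p : G.Walk u v)
    (hp : ∀ y ∈ p.support, y ∈ S) :
    ∃ q : G.Walk u v, q.IsPath ∧ q.IsChordless ∧ ∀ y ∈ q.support, y ∈ S := by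
  classical
  have hex : ∃ n, ∃ q : G.Walk u v, (∀ y ∈ q.support, y ∈ S) ∧ q.length = n :=
    ⟨_, p, hp, rfl⟩
  obtain ⟨q, hqS, hqlen⟩ := Nat.find_spec hex
  have hbypassS : ∀ y ∈ q.bypass.support, y ∈ S :=
    fun y hy ↦ hqS y (q.support_bypass_subset_support hy)
  refine ⟨q.bypass, q.bypass_isPath, isChordless_of_forall_length_le hbypassS ?_, hbypassS⟩
  intro r hrS
  have := Nat.find_min' hex ⟨r, hrS, rfl⟩
  have := q.length_bypass_le_length
  omega

theorem dist_lt_of_mem_support {x y z : V} (p : G.Walk x z) (hp : p.length = G.dist x z)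
    (hy : y ∈ p.support) (hyz : y ≠ z) : G.dist x y < G.dist x z := by
  classical
  calc G.dist x y ≤ (p.takeUntil y hy).length := dist_le _
    _ < p.length := length_takeUntil_lt_length hy hyz
    _ = G.dist x z := hp

end Walk

namespace IsChordal

theorem not_isChordless (hG : G.IsChordal) {v : V} {c : G.Walk v v} (hc : c.IsCycle)
    (hlen : 4 ≤ c.length) : ¬ c.IsChordless := by
  obtain ⟨a, b, ha, hb, hab, hnot⟩ := hG v c hc hlen
  exact fun h ↦ hnot (Walk.adj_toSubgraph_iff_mem_edges.mpr (h.mem_edges ha hb hab))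

theorem induce (hG : G.IsChordal) (s : Set V) : (G.induce s).IsChordal := by
  intro v c hc hlen
  let f : G.induce s ↪g G := Embedding.induce s
  obtain ⟨a, b, ha, hb, hab, hnadj⟩ :=
    hG _ (c.map f.toHom) (hc.map f.injective) (by rwa [Walk.length_map])
  rw [Walk.support_map, List.mem_map] at ha hb
  obtain ⟨a, ha, rfl⟩ := ha
  obtain ⟨b, hb, rfl⟩ := hb
  refine ⟨a, b, ha, hb, hab, fun h ↦ hnadj ?_⟩
  rw [Walk.toSubgraph_map]
  exact ⟨a, b, h, rfl, rfl⟩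

theorem adj_of_walks_through_separated (hG : G.IsChordal) {S T : Set V}
    (hST : ∀ a ∈ S, ∀ b ∈ T, a ≠ b ∧ ¬ G.Adj a b) {u v : V} (huv : u ≠ v)
    (p : G.Walk u v) (hp : ∀ y ∈ p.support, y = u ∨ y = v ∨ y ∈ S)
    (q : G.Walk u v) (hq : ∀ y ∈ q.support, y = u ∨ y = v ∨ y ∈ T) : G.Adj u v := by
  by_contra hnadj
  obtain ⟨P, hPpath, hPchordless, hPS⟩ := p.exists_isPath_isChordless_of_support_subset hp
  obtain ⟨Q, hQpath, hQchordless, hQT⟩ :=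
    q.reverse.exists_isPath_isChordless_of_support_subset (S := {y | y = v ∨ y = u ∨ y ∈ T})
      fun y hy ↦ by
        rw [Walk.support_reverse, List.mem_reverse] at hy
        rcases hq y hy with h | h | h <;> simp [h]
  have hmeet : ∀ y ∈ P.support, y ∈ Q.support → y = u ∨ y = v := by
    intro y hyP hyQ
    rcases hPS y hyP with h | h | hyS
    · exact .inl h
    · exact .inr h
    rcases hQT y hyQ with h | h | hyT
    · exact .inr h
    · exact .inl h
    · exact absurd rfl (hST y hyS y hyT).1
  have hcross : ∀ a ∈ P.support, ∀ b ∈ Q.support, G.Adj a b →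
      a ∈ Q.support ∨ b ∈ P.support := by
    intro a ha b hb hab
    rcases hPS a ha with rfl | rfl | haS
    · exact .inl Q.end_mem_support
    · exact .inl Q.start_mem_support
    rcases hQT b hb with rfl | rfl | hbT
    · exact .inr P.end_mem_support
    · exact .inr P.start_mem_support
    · exact absurd hab (hST a haS b hbT).2
  have hdisj : P.support.tail.Disjoint Q.support.tail := by
    intro y hyP hyQ
    rcases hmeet y (List.mem_of_mem_tail hyP) (List.mem_of_mem_tail hyQ) with rfl | rfl
    · have := hPpath.support_nodup
      rw [← P.cons_tail_support, List.nodup_cons] at this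
      exact this.1 hyP
    · have := hQpath.support_nodup
      rw [← Q.cons_tail_support, List.nodup_cons] at this
      exact this.1 hyQ
  have hP := (P.reachable.one_lt_dist_of_ne_of_not_adj huv hnadj).trans_le (dist_le P)
  have hQ := (Q.reachable.one_lt_dist_of_ne_of_not_adj huv.symm (hnadj ·.symm)).trans_le
    (dist_le Q)
  refine hG.not_isChordless (hPpath.isCycle_append hQpath hdisj (.inl hP)) ?_
    (hPchordless.append hQchordless hcross)
  rw [Walk.length_append]
  omega

end IsChordal

def lowerNeighborSet (G : SimpleGraph V) (x v : V) : Set V :=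
  {w | G.Adj w v ∧ G.dist x w + 1 = G.dist x v}

theorem lowerNeighborSet_nonempty {x v : V} (h : G.dist x v ≠ 0) :
    (G.lowerNeighborSet x v).Nonempty := by
  obtain ⟨p, hp⟩ := exists_walk_of_dist_ne_zero h
  have hnil : ¬ p.Nil := fun hnil ↦ h (hp ▸ hnil.length_eq_zero)
  refine ⟨p.penultimate, p.adj_penultimate hnil, ?_⟩
  have hle : G.dist x p.penultimate ≤ p.length - 1 := p.length_dropLast ▸ dist_le p.dropLast
  rcases (p.adj_penultimate hnil).diff_dist_adj (u := x) with h' | h' | h' <;> omega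

theorem Connected.exists_walk_below_dist (hconn : G.Connected) {x a b : V}
    (hab : G.dist x a = G.dist x b) :
    ∃ p : G.Walk a b, ∀ y ∈ p.support, y = a ∨ y = b ∨ G.dist x y < G.dist x a := by
  obtain ⟨pa, hpa⟩ := hconn.exists_walk_length_eq_dist x a
  obtain ⟨pb, hpb⟩ := hconn.exists_walk_length_eq_dist x b
  refine ⟨pa.reverse.append pb, fun y hy ↦ ?_⟩
  rw [Walk.mem_support_append_iff, Walk.support_reverse, List.mem_reverse] at hy
  rcases hy with hy | hy
  · rcases eq_or_ne y a with rfl | hya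
    · exact .inl rfl
    · exact .inr (.inr (pa.dist_lt_of_mem_support hpa hy hya))
  · rcases eq_or_ne y b with rfl | hyb
    · exact .inr (.inl rfl)
    · exact .inr (.inr (hab ▸ pb.dist_lt_of_mem_support hpb hy hyb))

theorem IsChordal.lowerNeighborSet_subset_or_subset (hG : G.IsChordal) (hconn : G.Connected)
    {x u v : V} (huv : G.Adj u v) (hd : G.dist x u = G.dist x v) :
    G.lowerNeighborSet x u ⊆ G.lowerNeighborSet x v ∨
      G.lowerNeighborSet x v ⊆ G.lowerNeighborSet x u := by
  by_contra! h
  obtain ⟨⟨a, ⟨hau, ha⟩, hanv⟩, ⟨b, ⟨hbv, hb⟩, hbnu⟩⟩ :=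
    And.imp Set.not_subset.mp Set.not_subset.mp h
  refine hbnu ⟨?_, by omega⟩
  have hav : ¬ G.Adj a v := fun h ↦ hanv ⟨h, by omega⟩
  -- `u` reaches `b` both via `v` and via `a` followed by levels below that of `a`.
  obtain ⟨p, hp⟩ := hconn.exists_walk_below_dist (show G.dist x a = G.dist x b by omega)
  refine (hG.adj_of_walks_through_separated (S := insert a {y | G.dist x y < G.dist x a})
    (T := {v}) ?_ (u := u) (v := b) ?_ (.cons hau.symm p) ?_
    (.cons huv (.cons hbv.symm .nil)) ?_).symm
  · rintro c hc _ rfl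
    rcases hc with rfl | hc
    · exact ⟨by rintro rfl; omega, hav⟩
    · change G.dist x c < G.dist x a at hc
      refine ⟨by rintro rfl; omega, fun hcv ↦ ?_⟩
      have := hcv.diff_dist_adj (u := x)
      omega
  · rintro rfl
    omega
  · intro y hy
    rcases List.mem_cons.mp hy with rfl | hy
    · exact .inl rfl
    · rcases hp y hy with rfl | rfl | hy
      · exact .inr (.inr (.inl rfl))
      · exact .inr (.inl rfl)
      · exact .inr (.inr (.inr hy))
  · intro y hy
    simp only [Walk.support_cons, Walk.support_nil, List.mem_cons, List.not_mem_nil,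
      or_false] at hy
    rcases hy with rfl | rfl | rfl <;> simp

theorem IsChordal.exists_mem_lowerNeighborSet_of_isClique (hG : G.IsChordal)
    (hconn : G.Connected) {x : V} {ℓ : ℕ} (hℓ : ℓ ≠ 0) {K : Finset V} (hK : K.Nonempty)
    (hKc : G.IsClique (K : Set V)) (hKℓ : ∀ v ∈ K, G.dist x v = ℓ) :
    ∃ w, ∀ v ∈ K, w ∈ G.lowerNeighborSet x v := by
  induction hK using Finset.Nonempty.cons_induction with
  | singleton a =>
    obtain ⟨w, hw⟩ := lowerNeighborSet_nonempty ((hKℓ a (by simp)).trans_ne hℓ)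
    exact ⟨w, by simpa using hw⟩
  | cons u K hu hK ih =>
    rw [Finset.coe_cons] at hKc
    simp only [Finset.mem_cons, forall_eq_or_imp] at hKℓ ⊢
    obtain ⟨w, hw⟩ := ih (hKc.subset (Set.subset_insert _ _)) hKℓ.2
    by_cases hwu : w ∈ G.lowerNeighborSet x u
    · exact ⟨w, hwu, hw⟩
    obtain ⟨w₁, hw₁⟩ := lowerNeighborSet_nonempty (hKℓ.1.trans_ne hℓ)
    refine ⟨w₁, hw₁, fun v hv ↦ ?_⟩
    have hvu : G.Adj v u := hKc (by simp [hv]) (by simp) (by rintro rfl; exact hu hv)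
    rcases hG.lowerNeighborSet_subset_or_subset hconn hvu ((hKℓ.2 v hv).trans hKℓ.1.symm)
      with h | h
    · exact absurd (h (hw v hv)) hwu
    · exact h hw₁

end SimpleGraph

/-- For a finite connected chordal graph `G` with clique number `t ≥ 2`,
any vertex `x` and any `ℓ ≥ 0`, the subgraph induced by the `ℓ`-th level
`N^ℓ(x) = {v | d_G(x,v) = ℓ}` is chordal and has clique number strictly smaller than `t`. -/
theorem level_induce_isChordal_and_cliqueFree {V : Type*} [Fintype V] (G : SimpleGraph V)
    (t : ℕ) (ht : 2 ≤ t) (hch : G.IsChordal) (hcn : G.cliqueNum = t)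
    (hconn : G.Connected) (x : V) (ℓ : ℕ) :
    (G.induce {v : V | G.dist x v = ℓ}).IsChordal ∧
      (G.induce {v : V | G.dist x v = ℓ}).CliqueFree t := by
  classical
  refine ⟨hch.induce _, fun K hK ↦ ?_⟩
  set K' := K.map (Function.Embedding.subtype _)
  have hK' : G.IsNClique t K' := hK.map.mono (map_comap_le _ _)
  have hK'ℓ : ∀ v ∈ K', G.dist x v = ℓ := by
    intro v hv
    obtain ⟨⟨v, hvℓ⟩, -, rfl⟩ := Finset.mem_map.mp hv
    exact hvℓ
  rcases eq_or_ne ℓ 0 with rfl | hℓ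
  · have hx : ∀ v ∈ K', v = x := fun v hv ↦ (hconn.dist_eq_zero_iff.mp (hK'ℓ v hv)).symm
    have := Finset.card_le_one.mpr fun a ha b hb ↦ (hx a ha).trans (hx b hb).symm
    rw [hK'.card_eq] at this
    omega
  · obtain ⟨w, hw⟩ := hch.exists_mem_lowerNeighborSet_of_isClique hconn hℓ
      (Finset.card_pos.mp (by rw [hK'.card_eq]; omega)) hK'.isClique hK'ℓ
    have hK'w := hK'.insert fun v hv ↦ (hw v hv).1
    have := hK'w.isClique.card_le_cliqueNum
    rw [hK'w.card_eq, hcn] at this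
    omega
end

section
/- Let G be a finite graph with clique number at most t that has a perfect elimination ordering L. Then there exists a colouring a of the vertices of G using at most ((t+1) choose 2) colours such that for every vertex v, a(v) differs from a(u) whenever u is a predecessor of v or u is a predecessor of a predecessor of v (with respect to L). -/
open SimpleGraph

/-- A linear order on the vertices is a *perfect elimination ordering* of `G` if for every
vertex `v`, the neighbours of `v` that are smaller than `v` form a clique. -/
def SimpleGraph.IsPerfectElimOrdering {V : Type*} [LinearOrder V] (G : SimpleGraph V) : Prop :=
  ∀ v : V, G.IsClique {u : V | G.Adj u v ∧ u < v}

/-- `u` is a *predecessor* of `v` if `u` and `v` are adjacent and `u` is smaller than `v`. -/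
def SimpleGraph.IsPredecessor {V : Type*} [LinearOrder V] (G : SimpleGraph V) (u v : V) : Prop :=
  G.Adj u v ∧ u < v

/-!
Colour the vertices greedily in the order `L`, giving `v` the least colour not used on the other
vertices reachable from `v` by at most two predecessor steps. These lie in the union of the closed
predecessor sets `N[w] = {w} ∪ pred(w)`, `w ∈ N[v]`, which are cliques of size at most `t`. If
`N[v] = {w₁ < ⋯ < wₘ}`, then `N[wᵢ] ⊇ {w₁, …, wᵢ}` because `N[v]` is a clique, so `N[wᵢ]` has at
most `t - i + 1` vertices outside `{w₁, …, wᵢ₋₁}`. Hence the union has at most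
`t + (t - 1) + ⋯ + 1 = (t + 1).choose 2` vertices, `v` included.
-/

open Finset

lemma Nat.exists_notMem_le_card (s : Finset ℕ) : ∃ n, n ≤ #s ∧ n ∉ s := by
  obtain ⟨n, hn, hns⟩ := exists_mem_notMem_of_card_lt_card (s := s) (t := range (#s + 1))
    (by simp)
  exact ⟨n, Nat.lt_succ_iff.mp (mem_range.mp hn), hns⟩

theorem exists_colouring_avoiding_earlier {V : Type*} [Preorder V] [WellFoundedLT V]
    (F : V → Finset V) (hF : ∀ v, ∀ u ∈ F v, u < v) :
    ∃ a : V → ℕ, ∀ v, a v ≤ #(F v) ∧ ∀ u ∈ F v, a u ≠ a v := by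
  classical
  choose pick hpick using Nat.exists_notMem_le_card
  let a : V → ℕ := WellFoundedLT.fix fun v rec =>
    pick ((F v).attach.image fun u => rec u.1 (hF v u.1 u.2))
  refine ⟨a, fun v => ?_⟩
  have hav : a v = pick ((F v).attach.image fun u => a u.1) := WellFoundedLT.fix_eq _ v
  obtain ⟨hle, hnotMem⟩ := hpick ((F v).attach.image fun u => a u.1)
  rw [← hav] at hle hnotMem
  exact ⟨hle.trans (card_image_le.trans card_attach.le),
    fun u hu hau => hnotMem (hau ▸ mem_image_of_mem _ (mem_attach _ ⟨u, hu⟩))⟩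

lemma Finset.sum_range_tsub_eq_choose_two (t : ℕ) : ∑ i ∈ range t, (t - i) = (t + 1).choose 2 := by
  induction t with
  | zero => simp
  | succ t ih =>
    rw [sum_range_succ', Nat.choose_succ_succ (t + 1), Nat.choose_one_right, ← ih]
    simp [add_comm]

lemma Finset.sum_range_tsub_le_choose_two {m t : ℕ} (hm : m ≤ t) :
    ∑ i ∈ range m, (t - i) ≤ (t + 1).choose 2 :=
  sum_range_tsub_eq_choose_two t ▸ sum_le_sum_of_subset (range_subset_range.mpr hm)

theorem Finset.card_biUnion_le_sum_range_tsub {α : Type*} [LinearOrder α] (t : ℕ)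
    (Q : Finset α) (N : α → Finset α) (hQN : ∀ w ∈ Q, {x ∈ Q | x ≤ w} ⊆ N w)
    (hN : ∀ w ∈ Q, #(N w) ≤ t) :
    #(Q.biUnion N) ≤ ∑ i ∈ range #Q, (t - i) := by
  induction Q using Finset.induction_on_max with
  | empty => simp
  | insert a s ha ih =>
    have has : a ∉ s := fun h => lt_irrefl a (ha a h)
    have hsN : s ⊆ s.biUnion N := fun w hw =>
      mem_biUnion.mpr ⟨w, hw, hQN w (mem_insert_of_mem hw) (by simp [hw])⟩
    have hsNa : s ⊆ N a := fun w hw =>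
      hQN a (mem_insert_self a s) (by simp [hw, (ha w hw).le])
    have ih' := ih (fun w hw x hx => hQN w (mem_insert_of_mem hw) (by simp_all))
      (fun w hw => hN w (mem_insert_of_mem hw))
    have hNa := card_sdiff_add_card_eq_card hsNa
    have hNat := hN a (mem_insert_self a s)
    rw [biUnion_insert, card_insert_of_notMem has, sum_range_succ]
    calc #(N a ∪ s.biUnion N) ≤ #(N a \ s ∪ s.biUnion N) :=
          card_le_card fun x hx => by
            have := @hsN x
            simp only [mem_union, mem_sdiff] at hx ⊢
            tauto
      _ ≤ #(N a \ s) + #(s.biUnion N) := card_union_le _ _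
      _ ≤ ∑ i ∈ range #s, (t - i) + (t - #s) := by omega

namespace SimpleGraph

lemma IsClique.card_le_of_cliqueFree {α : Type*} {G : SimpleGraph α} {t : ℕ} {s : Finset α}
    (hs : G.IsClique (s : Set α)) (hcf : G.CliqueFree (t + 1)) : #s ≤ t := by
  by_contra! hlt
  exact hcf.mono hlt s ⟨hs, rfl⟩

variable {V : Type*} [LinearOrder V] [Fintype V] {G : SimpleGraph V}

variable (G) in
open Classical in
noncomputable def closedPredFinset (v : V) : Finset V := {u | u = v ∨ G.IsPredecessor u v}

lemma mem_closedPredFinset {u v : V} :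
    u ∈ G.closedPredFinset v ↔ u = v ∨ G.IsPredecessor u v := by
  simp [closedPredFinset]

variable (G) in
lemma self_mem_closedPredFinset (v : V) : v ∈ G.closedPredFinset v :=
  mem_closedPredFinset.mpr (Or.inl rfl)

lemma IsPredecessor.mem_closedPredFinset {u v : V} (huv : G.IsPredecessor u v) :
    u ∈ G.closedPredFinset v :=
  SimpleGraph.mem_closedPredFinset.mpr (Or.inr huv)

lemma le_of_mem_closedPredFinset {u v : V} (h : u ∈ G.closedPredFinset v) : u ≤ v := by
  rcases mem_closedPredFinset.mp h with rfl | ⟨-, huv⟩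
  exacts [le_rfl, huv.le]

namespace IsPerfectElimOrdering

lemma isClique_closedPredFinset (hpeo : G.IsPerfectElimOrdering) (v : V) :
    G.IsClique (G.closedPredFinset v : Set V) := by
  have hcoe : (G.closedPredFinset v : Set V) = insert v {u | G.Adj u v ∧ u < v} := by
    ext u
    simp [mem_closedPredFinset, IsPredecessor]
  rw [hcoe]
  exact (hpeo v).insert fun u hu _ => hu.1.symm

lemma filter_le_subset_closedPredFinset (hpeo : G.IsPerfectElimOrdering) {v w : V}
    (hw : w ∈ G.closedPredFinset v) :
    {x ∈ G.closedPredFinset v | x ≤ w} ⊆ G.closedPredFinset w := by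
  intro x hx
  obtain ⟨hxv, hxw⟩ := mem_filter.mp hx
  rcases hxw.eq_or_lt with rfl | hlt
  · exact G.self_mem_closedPredFinset x
  · exact IsPredecessor.mem_closedPredFinset
      ⟨hpeo.isClique_closedPredFinset v hxv hw hlt.ne, hlt⟩

lemma card_closedPredFinset_le (hpeo : G.IsPerfectElimOrdering) {t : ℕ}
    (hcf : G.CliqueFree (t + 1)) (v : V) :
    #(G.closedPredFinset v) ≤ t :=
  (hpeo.isClique_closedPredFinset v).card_le_of_cliqueFree hcf

end IsPerfectElimOrdering

variable (G) in
noncomputable def closedPredFinset₂ (v : V) : Finset V :=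
  (G.closedPredFinset v).biUnion G.closedPredFinset

variable (G) in
lemma self_mem_closedPredFinset₂ (v : V) : v ∈ G.closedPredFinset₂ v :=
  mem_biUnion.mpr ⟨v, G.self_mem_closedPredFinset v, G.self_mem_closedPredFinset v⟩

lemma le_of_mem_closedPredFinset₂ {u v : V} (h : u ∈ G.closedPredFinset₂ v) : u ≤ v := by
  obtain ⟨w, hw, hu⟩ := mem_biUnion.mp h
  exact (le_of_mem_closedPredFinset hu).trans (le_of_mem_closedPredFinset hw)

lemma IsPerfectElimOrdering.card_closedPredFinset₂_le (hpeo : G.IsPerfectElimOrdering) {t : ℕ}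
    (hcf : G.CliqueFree (t + 1)) (v : V) : #(G.closedPredFinset₂ v) ≤ (t + 1).choose 2 :=
  (card_biUnion_le_sum_range_tsub t _ _ (fun _ => hpeo.filter_le_subset_closedPredFinset)
    fun w _ => hpeo.card_closedPredFinset_le hcf w).trans
    (sum_range_tsub_le_choose_two (hpeo.card_closedPredFinset_le hcf v))

end SimpleGraph

/-- Let `G` be a finite graph with clique number at most `t` admitting a
perfect elimination ordering. Then the vertices of `G` can be coloured with at most
`(t+1) choose 2` colours so that every vertex gets a colour different from those of its
predecessors and of the predecessors of its predecessors. -/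
theorem colouring_of_perfectElimOrdering {V : Type*} [Fintype V] [LinearOrder V]
    (G : SimpleGraph V) (t : ℕ) (hcf : G.CliqueFree (t + 1))
    (hpeo : G.IsPerfectElimOrdering) :
    ∃ a : V → ℕ, (∀ v, a v < (t + 1).choose 2) ∧
      (∀ u v, G.IsPredecessor u v → a u ≠ a v) ∧
      (∀ u w v, G.IsPredecessor u w → G.IsPredecessor w v → a u ≠ a v) := by
  obtain ⟨a, ha⟩ := exists_colouring_avoiding_earlier (fun v => (G.closedPredFinset₂ v).erase v)
    fun _ _ hu => (le_of_mem_closedPredFinset₂ (mem_of_mem_erase hu)).lt_of_ne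
      (ne_of_mem_erase hu)
  refine ⟨a, fun v => ?_, fun u v huv => ?_, fun u w v huw hwv => ?_⟩
  · exact ((ha v).1.trans_lt (card_erase_lt_of_mem (G.self_mem_closedPredFinset₂ v))).trans_le
      (hpeo.card_closedPredFinset₂_le hcf v)
  · exact (ha v).2 u (mem_erase.mpr ⟨huv.2.ne, mem_biUnion.mpr
      ⟨v, G.self_mem_closedPredFinset v, huv.mem_closedPredFinset⟩⟩)
  · exact (ha v).2 u (mem_erase.mpr ⟨(huw.2.trans hwv.2).ne, mem_biUnion.mpr
      ⟨w, hwv.mem_closedPredFinset, huw.mem_closedPredFinset⟩⟩)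
end
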